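/- Let W ∈ ℝ^{n×n} and m > 0 satisfy (I − W) ⪰ mI, and let J ∈ ℝ^{n×n} be diagonal with 0 ≤ Jᵢᵢ ≤ 1 for all i. Then the matrix I − J W is invertible. (Consequently the implicit-differentiation Jacobian formula for the equilibrium network always exists.) -/

import Mathlib

/-!
If `(1 - diagonal d * W) v = 0` with `v ≠ 0`, then `v = diagonal d (W v)`. Since `0 ≤ dᵢ ≤ 1`,
`vᵢ² = dᵢ² (W v)ᵢ² ≤ dᵢ (W v)ᵢ² = vᵢ (W v)ᵢ`, so `v ⬝ v ≤ v ⬝ W v`. On the other hand the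
strong monotonicity of `1 - W` gives `v ⬝ v - v ⬝ W v ≥ m (v ⬝ v) > 0`.
-/

open Matrix

section

variable {ι : Type*} [Fintype ι]

lemma dotProduct_transpose_mulVec_self (A : Matrix ι ι ℝ) (v : ι → ℝ) :
    v ⬝ᵥ (Aᵀ *ᵥ v) = v ⬝ᵥ (A *ᵥ v) := by
  rw [mulVec_transpose, dotProduct_mulVec, dotProduct_comm]

lemma mul_dotProduct_self_le_of_posSemidef [DecidableEq ι] {A : Matrix ι ι ℝ} {m : ℝ}
    (hA : ((1/2 : ℝ) • (A + Aᵀ) - m • (1 : Matrix ι ι ℝ)).PosSemidef) (v : ι → ℝ) :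
    m * (v ⬝ᵥ v) ≤ v ⬝ᵥ (A *ᵥ v) := by
  have h := hA.dotProduct_mulVec_nonneg v
  simp only [star_trivial, sub_mulVec, add_mulVec, smul_mulVec, one_mulVec, dotProduct_sub,
    dotProduct_smul, dotProduct_add, dotProduct_transpose_mulVec_self, smul_eq_mul] at h
  linarith

lemma diagonal_mulVec_dotProduct_self_le [DecidableEq ι] {d : ι → ℝ}
    (hd : ∀ i, 0 ≤ d i ∧ d i ≤ 1) (y : ι → ℝ) : (diagonal d *ᵥ y) ⬝ᵥ (diagonal d *ᵥ y) ≤ (diagonal d *ᵥ y) ⬝ᵥ y := by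
  simp only [dotProduct, mulVec_diagonal]
  refine Finset.sum_le_sum fun i _ => ?_
  obtain ⟨hd0, hd1⟩ := hd i
  nlinarith [mul_nonneg (mul_nonneg hd0 (sub_nonneg.2 hd1)) (mul_self_nonneg (y i))]

end

/-- **Invertibility of `I - JW` (existence of the backward-pass Jacobian).**
If `I - W ⪰ mI` with `m > 0` and `J` is diagonal with `0 ≤ Jᵢᵢ ≤ 1`, then the matrix
`I - J W` is invertible. -/
theorem I_sub_JW_invertible (n : ℕ)
    (W : Matrix (Fin n) (Fin n) ℝ) (m : ℝ) (hm : 0 < m)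
    (hmono : ((1/2 : ℝ) • ((1 - W) + (1 - W)ᵀ) -
        m • (1 : Matrix (Fin n) (Fin n) ℝ)).PosSemidef)
    (d : Fin n → ℝ) (hd : ∀ i, 0 ≤ d i ∧ d i ≤ 1) :
    IsUnit (1 - Matrix.diagonal d * W : Matrix (Fin n) (Fin n) ℝ) := by
  rw [isUnit_iff_isUnit_det, isUnit_iff_ne_zero]
  intro hdet
  obtain ⟨v, hv0, hv⟩ := exists_mulVec_eq_zero_iff.mpr hdet
  have hv_fixed : diagonal d *ᵥ (W *ᵥ v) = v := by
    rw [sub_mulVec, one_mulVec, ← mulVec_mulVec, sub_eq_zero] at hv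
    exact hv.symm
  have hcontract := diagonal_mulVec_dotProduct_self_le hd (W *ᵥ v)
  rw [hv_fixed] at hcontract
  have hcoercive := mul_dotProduct_self_le_of_posSemidef hmono v
  rw [sub_mulVec, one_mulVec, dotProduct_sub] at hcoercive
  have hpos : 0 < v ⬝ᵥ v := by simpa using dotProduct_self_star_pos_iff.mpr hv0
  linarith [mul_pos hm hpos]
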